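/- arXiv:2404.14439 — 2 statements merged into one kernel-verified Lean document; each statement's English description precedes it below -/
import Mathlib

section
/- Let f be the map on standard type B partitions of ⟨n⟩ with 2k+1 blocks that sends π to the standardization of its complement π^c. Then f is an involution (f² = id), hence a bijection of S_B(⟨n⟩,k). -/
open Finset Polynomial

/-- The ground set ⟨n⟩ = {-n, ..., -1, 0, 1, ..., n}. -/
noncomputable def angleB (n : ℕ) : Finset ℤ := Finset.Icc (-(n : ℤ)) (n : ℤ)

/-- An ordered type B (signed) partition of ⟨n⟩ with 2k+1 blocks:
pairwise disjoint nonempty blocks covering ⟨n⟩, with 0 ∈ S₀, S₀ closed under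
negation, and S_{2i} = -S_{2i-1} for i ≥ 1. -/
def IsOrderedB (n k : ℕ) (S : Fin (2*k+1) → Finset ℤ) : Prop :=
  (∀ i, (S i).Nonempty) ∧
  (∀ i j, i ≠ j → Disjoint (S i) (S j)) ∧
  (Finset.univ.biUnion S = angleB n) ∧
  ((0 : ℤ) ∈ S 0) ∧
  (∀ x ∈ S 0, -x ∈ S 0) ∧
  (∀ i : ℕ, 1 ≤ i → ∀ h : 2*i < 2*k+1,
    S ⟨2*i, h⟩ = (S ⟨2*i-1, by omega⟩).image (fun x => -x))

/-- m_j = min |S_j| (0 if the block is empty). -/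
def mB {m : ℕ} (S : Fin m → Finset ℤ) (j : Fin m) : ℤ :=
  WithTop.untopD 0 (((S j).image (fun x => |x|)).min)

/-- M_j = max |S_j| (0 if the block is empty). -/
def MB {m : ℕ} (S : Fin m → Finset ℤ) (j : Fin m) : ℤ :=
  WithBot.unbotD 0 (((S j).image (fun x => |x|)).max)

/-- A standard type B partition: ordered, with m_{2i} ∈ S_{2i} for i ≥ 1 and
0 = m₀ < m₂ < m₄ < ... < m_{2k}. -/
def IsStandardB (n k : ℕ) (S : Fin (2*k+1) → Finset ℤ) : Prop :=
  IsOrderedB n k S ∧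
  (∀ i : ℕ, 1 ≤ i → ∀ h : 2*i < 2*k+1, mB S ⟨2*i, h⟩ ∈ S ⟨2*i, h⟩) ∧
  (∀ i : ℕ, ∀ h : 2*(i+1) < 2*k+1, mB S ⟨2*i, by omega⟩ < mB S ⟨2*(i+1), h⟩)

/-- inv ρ: number of pairs (s, S_j) with s ∈ S_i for some i < j and s ≥ m_j. -/
noncomputable def invB {m : ℕ} (S : Fin m → Finset ℤ) : ℕ :=
  {p : ℤ × Fin m | (∃ i < p.2, p.1 ∈ S i) ∧ mB S p.2 ≤ p.1}.ncard

/-- ros_B = inv. -/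
noncomputable def rosB {m : ℕ} (S : Fin m → Finset ℤ) : ℕ := invB S

/-- los_{B'}: pairs (s, S_j) with s ∈ S_i for some i > j and s ≥ m_j. -/
noncomputable def losB' {m : ℕ} (S : Fin m → Finset ℤ) : ℕ :=
  {p : ℤ × Fin m | (∃ i, p.2 < i ∧ p.1 ∈ S i) ∧ mB S p.2 ≤ p.1}.ncard

/-- lob_{B'}: pairs (s, S_j) with s ∈ S_i for some i > j and 0 < s ≤ m_j. -/
noncomputable def lobB' {m : ℕ} (S : Fin m → Finset ℤ) : ℕ :=
  {p : ℤ × Fin m | (∃ i, p.2 < i ∧ p.1 ∈ S i) ∧ 0 < p.1 ∧ p.1 ≤ mB S p.2}.ncard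

/-- rcb_B: pairs (s, S_j) with s ∈ S_i for some i < j and 0 < s ≤ M_j. -/
noncomputable def rcbB {m : ℕ} (S : Fin m → Finset ℤ) : ℕ :=
  {p : ℤ × Fin m | (∃ i < p.2, p.1 ∈ S i) ∧ 0 < p.1 ∧ p.1 ≤ MB S p.2}.ncard

/-- rob_B: pairs (s, S_j) with s ∈ S_i for some i < j and 0 < s ≤ m_j. -/
noncomputable def robB {m : ℕ} (S : Fin m → Finset ℤ) : ℕ :=
  {p : ℤ × Fin m | (∃ i < p.2, p.1 ∈ S i) ∧ 0 < p.1 ∧ p.1 ≤ mB S p.2}.ncard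

/-- rcs_B: pairs (s, S_j) with s ∈ S_i for some i < j and s ≥ M_j. -/
noncomputable def rcsB {m : ℕ} (S : Fin m → Finset ℤ) : ℕ :=
  {p : ℤ × Fin m | (∃ i < p.2, p.1 ∈ S i) ∧ MB S p.2 ≤ p.1}.ncard

/-- Type B Stirling numbers of the second kind. -/
def StirB : ℕ → ℕ → ℕ
  | 0, 0 => 1
  | 0, _+1 => 0
  | n+1, 0 => StirB n 0
  | n+1, k+1 => StirB n k + (2*(k+1)+1) * StirB n (k+1)

/-- [m] = 1 + q + ... + q^{m-1}. -/
noncomputable def qb (m : ℕ) : Polynomial ℤ := ∑ i ∈ Finset.range m, (Polynomial.X : Polynomial ℤ) ^ i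

/-- Type B q-Stirling numbers of the second kind. -/
noncomputable def qStirB : ℕ → ℕ → Polynomial ℤ
  | 0, 0 => 1
  | 0, _+1 => 0
  | n+1, 0 => qStirB n 0
  | n+1, k+1 => qStirB n k + qb (2*(k+1)+1) * qStirB n (k+1)

/-- [2k]!! = [2k][2k-2]⋯[2]. -/
noncomputable def qdf : ℕ → Polynomial ℤ
  | 0 => 1
  | k+1 => qb (2*(k+1)) * qdf k

/-- The complement map on ⟨n⟩: i ↦ n+1-i for i > 0, -i ↦ -(n+1-i), 0 ↦ 0. -/
def complB (n : ℕ) (x : ℤ) : ℤ :=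
  if 0 < x then (n : ℤ) + 1 - x else if x < 0 then -((n : ℤ) + 1) - x else 0

/-- Complement of a partition, blockwise. -/
def complP (n : ℕ) {m : ℕ} (S : Fin m → Finset ℤ) : Fin m → Finset ℤ :=
  fun j => (S j).image (complB n)

/-- The index of the block paired with block i: 0 ↦ 0, 2ℓ-1 ↦ 2ℓ, 2ℓ ↦ 2ℓ-1. -/
def pairIdx (k : ℕ) (i : Fin (2*k+1)) : Fin (2*k+1) :=
  if i.val = 0 then i
  else if h2 : i.val % 2 = 1 then ⟨i.val + 1, by omega⟩ else ⟨i.val - 1, by omega⟩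

/-!
Complementation `complB n` is an involution of `⟨n⟩` commuting with negation, so applied
blockwise it turns an ordered type B partition into an ordered one. Every ordered partition has
a standard rearrangement: sort the pairs of blocks `(S_{2p+1}, S_{2p+2})` by their least absolute
value and, within each pair, put second the block containing that value as a positive number.
The rearrangement is unique: in a standard partition the nonzero blocks containing their own least
absolute value are exactly the even ones, and these are ordered by it. Hence `f (f π)`, a standard
rearrangement of `(π^c)^c = π`, is `π`.
-/

open Pointwise

section Complement

variable {n : ℕ}

lemma complB_zero : complB n 0 = 0 := by
  simp [complB]

lemma complB_neg (x : ℤ) : complB n (-x) = -complB n x := by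
  unfold complB; split_ifs <;> omega

lemma complB_mem_angleB {x : ℤ} (hx : x ∈ angleB n) : complB n x ∈ angleB n := by
  simp only [angleB, mem_Icc] at *; unfold complB; split_ifs <;> omega

lemma complB_complB {x : ℤ} (hx : x ∈ angleB n) : complB n (complB n x) = x := by
  simp only [angleB, mem_Icc] at hx; unfold complB; split_ifs <;> omega

lemma image_complB_image_complB {s : Finset ℤ} (hs : s ⊆ angleB n) :
    (s.image (complB n)).image (complB n) = s := by
  rw [image_image]
  exact (image_congr fun x hx => complB_complB (hs hx)).trans image_id

lemma image_complB_angleB : (angleB n).image (complB n) = angleB n :=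
  (image_subset_iff.2 fun _ hx => complB_mem_angleB hx).antisymm fun x hx =>
    mem_image.2 ⟨complB n x, complB_mem_angleB hx, complB_complB hx⟩

lemma disjoint_image_complB {s t : Finset ℤ} (hs : s ⊆ angleB n) (ht : t ⊆ angleB n)
    (h : Disjoint s t) : Disjoint (s.image (complB n)) (t.image (complB n)) := by
  rw [← image_complB_image_complB hs, ← image_complB_image_complB ht] at h
  exact h.of_image_finset

end Complement

section AbsMin

def absMin (s : Finset ℤ) : ℤ := WithTop.untopD 0 ((s.image fun x => |x|).min)

lemma mB_eq_absMin {m : ℕ} (S : Fin m → Finset ℤ) (j : Fin m) : mB S j = absMin (S j) := rfl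

lemma mB_comp {m : ℕ} (S : Fin m → Finset ℤ) (σ : Fin m → Fin m) (j : Fin m) :
    mB (S ∘ σ) j = mB S (σ j) := rfl

variable {s : Finset ℤ}

lemma absMin_eq_min' (hs : s.Nonempty) :
    absMin s = (s.image fun x => |x|).min' (hs.image _) := by
  rw [absMin, ← coe_min' (hs.image _)]
  rfl

lemma absMin_le_abs {x : ℤ} (hx : x ∈ s) : absMin s ≤ |x| := by
  rw [absMin_eq_min' ⟨x, hx⟩]
  exact min'_le _ _ (mem_image_of_mem _ hx)

lemma exists_abs_eq_absMin (hs : s.Nonempty) : ∃ x ∈ s, |x| = absMin s := by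
  rw [absMin_eq_min' hs]
  exact mem_image.1 (min'_mem _ _)

lemma absMin_neg : absMin (-s) = absMin s := by
  simp only [absMin, ← image_neg_eq_neg, image_image, Function.comp_def, abs_neg]

lemma absMin_eq_zero (h : (0 : ℤ) ∈ s) : absMin s = 0 := by
  obtain ⟨x, -, hx⟩ := exists_abs_eq_absMin ⟨0, h⟩
  have := absMin_le_abs h
  rw [abs_zero] at this
  linarith [abs_nonneg x]

lemma absMin_pos (hs : s.Nonempty) (h : (0 : ℤ) ∉ s) : 0 < absMin s := by
  obtain ⟨x, hx, hxs⟩ := exists_abs_eq_absMin hs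
  rw [← hxs]
  exact abs_pos.2 (ne_of_mem_of_not_mem hx h)

lemma absMin_mem_or_mem_neg (hs : s.Nonempty) : absMin s ∈ s ∨ absMin s ∈ -s := by
  obtain ⟨x, hx, hxs⟩ := exists_abs_eq_absMin hs
  rw [← hxs]
  rcases abs_choice x with h | h <;> rw [h]
  · exact .inl hx
  · exact .inr (neg_mem_neg hx)

end AbsMin

section Blocks

/-- Indexing of the blocks of a partition with `2k+1` blocks: `none` is `S₀` and `some (p, b)` is
`S_{2p+1+b}`, so `some (p, 0)` and `some (p, 1)` are the two blocks of the `p`-th pair. -/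
def blockEquiv (k : ℕ) : Option (Fin k × Fin 2) ≃ Fin (2*k+1) :=
  (Equiv.optionCongr (finProdFinEquiv.trans (finCongr (Nat.mul_comm k 2)))).trans
    (finSuccEquiv (2*k)).symm

variable {k : ℕ}

def pairBlock (p : Fin k) (b : Fin 2) : Fin (2*k+1) := blockEquiv k (some (p, b))

lemma blockEquiv_none : blockEquiv k none = 0 := rfl

lemma val_pairBlock (p : Fin k) (b : Fin 2) : (pairBlock p b : ℕ) = 2 * p + b + 1 := by
  change (b : ℕ) + 2 * p + 1 = _
  ring

lemma pairBlock_ne_zero (p : Fin k) (b : Fin 2) : pairBlock p b ≠ 0 := by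
  simp [pairBlock, ← blockEquiv_none]

lemma pairBlock_inj {p q : Fin k} {b c : Fin 2} :
    pairBlock p b = pairBlock q c ↔ p = q ∧ b = c := by
  simp [pairBlock]

lemma forall_blocks {P : Fin (2*k+1) → Prop} :
    (∀ j, P j) ↔ P 0 ∧ ∀ p, P (pairBlock p 0) ∧ P (pairBlock p 1) := by
  simp [← (blockEquiv k).forall_congr_right, Option.forall, Prod.forall, Fin.forall_fin_two,
    blockEquiv_none, pairBlock]

lemma exists_eq_pairBlock {j : Fin (2*k+1)} (hj : j ≠ 0) : ∃ p b, j = pairBlock p b := by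
  obtain ⟨_ | ⟨p, b⟩, rfl⟩ := (blockEquiv k).surjective j
  · exact absurd blockEquiv_none hj
  · exact ⟨p, b, rfl⟩

lemma mk_eq_pairBlock_one {i : ℕ} (h : 2*(i+1) < 2*k+1) :
    (⟨2*(i+1), h⟩ : Fin (2*k+1)) = pairBlock ⟨i, by omega⟩ 1 :=
  Fin.ext (by rw [val_pairBlock]; rfl)

lemma mk_eq_pairBlock_zero {i : ℕ} (h : 2*(i+1)-1 < 2*k+1) :
    (⟨2*(i+1)-1, h⟩ : Fin (2*k+1)) = pairBlock ⟨i, by omega⟩ 0 :=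
  Fin.ext (by rw [val_pairBlock]; rfl)

lemma forall_pair_indices_iff {P : Fin (2*k+1) → Fin (2*k+1) → Prop} :
    (∀ i : ℕ, 1 ≤ i → ∀ h : 2*i < 2*k+1, P ⟨2*i, h⟩ ⟨2*i-1, by omega⟩) ↔
      ∀ p : Fin k, P (pairBlock p 1) (pairBlock p 0) := by
  constructor
  · intro h p
    have := h (p+1) (by omega) (by omega)
    rwa [mk_eq_pairBlock_one, mk_eq_pairBlock_zero] at this
  · intro h i hi hik
    obtain ⟨j, rfl⟩ : ∃ j, i = j + 1 := ⟨i - 1, by omega⟩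
    rw [mk_eq_pairBlock_one, mk_eq_pairBlock_zero]
    exact h _

end Blocks

section Ordered

variable {n k : ℕ} {S : Fin (2*k+1) → Finset ℤ}

lemma IsOrderedB.subset_angleB (hS : IsOrderedB n k S) (j : Fin (2*k+1)) : S j ⊆ angleB n :=
  hS.2.2.1 ▸ subset_biUnion_of_mem S (mem_univ j)

lemma IsOrderedB.eq_of_mem_of_mem (hS : IsOrderedB n k S) {i j : Fin (2*k+1)} {x : ℤ}
    (hi : x ∈ S i) (hj : x ∈ S j) : i = j := by
  by_contra hij
  exact disjoint_left.1 (hS.2.1 i j hij) hi hj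

lemma IsOrderedB.zero_not_mem (hS : IsOrderedB n k S) {j : Fin (2*k+1)} (hj : j ≠ 0) :
    (0 : ℤ) ∉ S j :=
  fun h => hj (hS.eq_of_mem_of_mem h hS.2.2.2.1)

lemma isOrderedB_complP (hS : IsOrderedB n k S) : IsOrderedB n k (complP n S) := by
  have hsub := hS.subset_angleB
  obtain ⟨hne, hdisj, hcover, hzero, hneg, hpair⟩ := hS
  refine ⟨fun j => (hne j).image _,
    fun i j hij => disjoint_image_complB (hsub i) (hsub j) (hdisj i j hij),
    ?_, mem_image.2 ⟨0, hzero, complB_zero⟩, ?_, fun i hi h => ?_⟩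
  · change univ.biUnion (fun j => (S j).image (complB n)) = _
    rw [← biUnion_image, hcover, image_complB_angleB]
  · simp only [complP, mem_image, forall_exists_index, and_imp, forall_apply_eq_imp_iff₂]
    exact fun y hy => ⟨-y, hneg y hy, complB_neg y⟩
  · simp only [complP, hpair i hi h, image_image]
    exact image_congr fun x _ => complB_neg x

lemma complP_complP (hS : IsOrderedB n k S) : complP n (complP n S) = S :=
  funext fun j => image_complB_image_complB (hS.subset_angleB j)

lemma IsOrderedB.pairBlock_one (hS : IsOrderedB n k S) (p : Fin k) :
    S (pairBlock p 1) = -S (pairBlock p 0) := by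
  rw [← image_neg_eq_neg]
  exact (forall_pair_indices_iff (P := fun i j => S i = (S j).image (-·))).1 hS.2.2.2.2.2 p

lemma IsOrderedB.pairBlock_eq_neg (hS : IsOrderedB n k S) (p : Fin k) {b c : Fin 2}
    (hbc : b ≠ c) : S (pairBlock p b) = -S (pairBlock p c) := by
  fin_cases b <;> fin_cases c <;> simp only [ne_eq, not_true_eq_false] at hbc
  · simp [hS.pairBlock_one p]
  · exact hS.pairBlock_one p

lemma IsOrderedB.mB_pairBlock (hS : IsOrderedB n k S) (p : Fin k) (b : Fin 2) :
    mB S (pairBlock p b) = mB S (pairBlock p 1) := by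
  obtain rfl | rfl : b = 0 ∨ b = 1 := by omega
  · rw [mB_eq_absMin, mB_eq_absMin, hS.pairBlock_one p, absMin_neg]
  · rfl

lemma IsOrderedB.mB_zero (hS : IsOrderedB n k S) : mB S 0 = 0 :=
  absMin_eq_zero hS.2.2.2.1

lemma IsOrderedB.mB_pos (hS : IsOrderedB n k S) {j : Fin (2*k+1)} (hj : j ≠ 0) : 0 < mB S j :=
  absMin_pos (hS.1 j) (hS.zero_not_mem hj)

lemma IsOrderedB.mB_mem_pairBlock (hS : IsOrderedB n k S) (p : Fin k) :
    mB S (pairBlock p 1) ∈ S (pairBlock p 1) ∨ mB S (pairBlock p 1) ∈ S (pairBlock p 0) := by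
  rw [hS.pairBlock_eq_neg p (show (0 : Fin 2) ≠ 1 by decide)]
  exact absMin_mem_or_mem_neg (hS.1 _)

lemma IsOrderedB.injective_mB_pairBlock (hS : IsOrderedB n k S) :
    Function.Injective fun p => mB S (pairBlock p 1) := by
  have hmem : ∀ p, ∃ b, mB S (pairBlock p 1) ∈ S (pairBlock p b) := fun p =>
    (hS.mB_mem_pairBlock p).elim (⟨1, ·⟩) (⟨0, ·⟩)
  intro p q hpq
  obtain ⟨b, hb⟩ := hmem p
  obtain ⟨c, hc⟩ := hmem q
  rw [show mB S (pairBlock p 1) = mB S (pairBlock q 1) from hpq] at hb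
  exact (pairBlock_inj.1 (hS.eq_of_mem_of_mem hb hc)).1

lemma IsOrderedB.comp_perm (hS : IsOrderedB n k S) (σ : Equiv.Perm (Fin (2*k+1)))
    (h0 : σ 0 = 0) (hpair : ∀ p, S (σ (pairBlock p 1)) = -S (σ (pairBlock p 0))) :
    IsOrderedB n k (S ∘ σ) := by
  obtain ⟨hne, hdisj, hcover, hzero, hneg, -⟩ := hS
  refine ⟨fun j => hne (σ j), fun i j hij => hdisj _ _ (σ.injective.ne hij), ?_, ?_, ?_,
    (forall_pair_indices_iff (P := fun i j => S (σ i) = (S (σ j)).image (-·))).2 fun p => by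
      simpa only [image_neg_eq_neg] using hpair p⟩
  · ext x
    rw [← hcover]
    simp only [mem_biUnion, mem_univ, true_and, Function.comp_apply]
    exact (σ.surjective.exists (p := fun j => x ∈ S j)).symm
  · simpa only [Function.comp_apply, h0] using hzero
  · simpa only [Function.comp_apply, h0] using hneg

end Ordered

section Standardization

variable {n k : ℕ} {S : Fin (2*k+1) → Finset ℤ}

lemma isStandardB_iff : IsStandardB n k S ↔ IsOrderedB n k S ∧
    (∀ p, mB S (pairBlock p 1) ∈ S (pairBlock p 1)) ∧
      StrictMono fun p => mB S (pairBlock p 1) := by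
  refine and_congr_right fun hS =>
    and_congr (forall_pair_indices_iff (P := fun i _ => mB S i ∈ S i)) ?_
  constructor
  · intro h
    cases k with
    | zero => exact fun p => p.elim0
    | succ k =>
      refine Fin.strictMono_iff_lt_succ.2 fun p => ?_
      have := h (p+1) (by omega)
      rw [mk_eq_pairBlock_one, mk_eq_pairBlock_one] at this
      exact this
  · intro h i hi
    rcases i with _ | i
    · change mB S 0 < _
      rw [hS.mB_zero, mk_eq_pairBlock_one]
      exact hS.mB_pos (pairBlock_ne_zero _ 1)
    · have hlt : (⟨i, by omega⟩ : Fin k) < ⟨i+1, by omega⟩ := Nat.lt_succ_self i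
      simpa only [mk_eq_pairBlock_one] using h hlt

def pairPerm (ρ : Equiv.Perm (Fin k)) (φ : Fin k → Equiv.Perm (Fin 2)) :
    Equiv.Perm (Fin (2*k+1)) :=
  ((blockEquiv k).symm.trans (Equiv.optionCongr (ρ.prodShear φ))).trans (blockEquiv k)

lemma pairPerm_zero (ρ : Equiv.Perm (Fin k)) (φ : Fin k → Equiv.Perm (Fin 2)) :
    pairPerm ρ φ 0 = 0 := by
  simp [pairPerm, ← blockEquiv_none]

lemma pairPerm_pairBlock (ρ : Equiv.Perm (Fin k)) (φ : Fin k → Equiv.Perm (Fin 2)) (p : Fin k)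
    (b : Fin 2) : pairPerm ρ φ (pairBlock p b) = pairBlock (ρ p) (φ p b) := by
  simp [pairPerm, pairBlock]

lemma IsOrderedB.comp_pairPerm (hS : IsOrderedB n k S) (ρ : Equiv.Perm (Fin k))
    (φ : Fin k → Equiv.Perm (Fin 2)) : IsOrderedB n k (S ∘ pairPerm ρ φ) :=
  hS.comp_perm _ (pairPerm_zero ρ φ) fun p => by
    simp only [pairPerm_pairBlock]
    exact hS.pairBlock_eq_neg _ ((φ p).injective.ne (by decide))

theorem IsOrderedB.exists_perm_isStandardB (hS : IsOrderedB n k S) :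
    ∃ σ : Equiv.Perm (Fin (2*k+1)), IsStandardB n k (S ∘ σ) := by
  classical
  set μ : Fin k → ℤ := fun p => mB S (pairBlock p 1)
  set ρ := Tuple.sort μ
  set φ : Fin k → Equiv.Perm (Fin 2) := fun q =>
    if μ (ρ q) ∈ S (pairBlock (ρ q) 1) then 1 else Equiv.swap 0 1
  have hμ : ∀ q, mB (S ∘ pairPerm ρ φ) (pairBlock q 1) = μ (ρ q) := fun q => by
    rw [mB_comp, pairPerm_pairBlock, hS.mB_pairBlock]
  refine ⟨pairPerm ρ φ, isStandardB_iff.2 ⟨hS.comp_pairPerm ρ φ, fun q => ?_, ?_⟩⟩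
  · rw [hμ, Function.comp_apply, pairPerm_pairBlock]
    by_cases h : μ (ρ q) ∈ S (pairBlock (ρ q) 1)
    · simp [φ, h]
    · simpa [φ, h] using (hS.mB_mem_pairBlock (ρ q)).resolve_left h
  · simp only [hμ]
    exact (Tuple.monotone_sort μ).strictMono_of_injective
      (hS.injective_mB_pairBlock.comp ρ.injective)

lemma IsStandardB.exists_eq_pairBlock_one (hS : IsStandardB n k S) {j : Fin (2*k+1)}
    (hj : j ≠ 0) (hmem : mB S j ∈ S j) : ∃ q, j = pairBlock q 1 := by
  obtain ⟨hO, hmem', -⟩ := isStandardB_iff.1 hS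
  obtain ⟨q, b, rfl⟩ := exists_eq_pairBlock hj
  refine ⟨q, ?_⟩
  fin_cases b
  · rw [hO.mB_pairBlock] at hmem
    exact absurd (hO.eq_of_mem_of_mem hmem (hmem' q)) (by simp [pairBlock_inj])
  · rfl

theorem IsStandardB.comp_perm_eq (hS : IsStandardB n k S) (τ : Equiv.Perm (Fin (2*k+1)))
    (hτ : IsStandardB n k (S ∘ τ)) : S ∘ τ = S := by
  obtain ⟨hO, -, hmono⟩ := isStandardB_iff.1 hS
  obtain ⟨hO', hmem', hmono'⟩ := isStandardB_iff.1 hτ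
  have hτ0 : τ 0 = 0 := hO.eq_of_mem_of_mem hO'.2.2.2.1 hO.2.2.2.1
  have heven : ∀ p, ∃ q, τ (pairBlock p 1) = pairBlock q 1 := fun p =>
    hS.exists_eq_pairBlock_one (fun h => pairBlock_ne_zero p 1 (τ.injective (h.trans hτ0.symm)))
      (hmem' p)
  choose g hg using heven
  have hg_mono : StrictMono g := fun p q hpq =>
    hmono.lt_iff_lt.1 (by simpa only [mB_comp, hg] using hmono' hpq)
  have h_even : ∀ p, S (τ (pairBlock p 1)) = S (pairBlock p 1) := fun p => by
    rw [hg, hg_mono.eq_id]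
    rfl
  refine funext (forall_blocks.2 ⟨by simp [hτ0], fun p => ⟨?_, h_even p⟩⟩)
  rw [hO'.pairBlock_eq_neg p (show (0 : Fin 2) ≠ 1 by decide), Function.comp_apply, h_even,
    ← hO.pairBlock_eq_neg p (show (0 : Fin 2) ≠ 1 by decide)]

end Standardization

/-- the map sending a standard type B partition to the
standardization of its complement (a permutation of the complemented blocks)
is an involution, hence a bijection of S_B(⟨n⟩,k). -/
theorem stmt11 (n k : ℕ) :
    ∃ f : {S : Fin (2*k+1) → Finset ℤ // IsStandardB n k S} →
          {S : Fin (2*k+1) → Finset ℤ // IsStandardB n k S},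
      (∀ π, ∃ σ : Equiv.Perm (Fin (2*k+1)),
        ∀ j, (f π).1 j = complP n π.1 (σ j)) ∧
      Function.Involutive f := by
  choose σ hσ using fun π : {S : Fin (2*k+1) → Finset ℤ // IsStandardB n k S} =>
    (isOrderedB_complP π.2.1).exists_perm_isStandardB
  let f : {S : Fin (2*k+1) → Finset ℤ // IsStandardB n k S} →
      {S : Fin (2*k+1) → Finset ℤ // IsStandardB n k S} :=
    fun π => ⟨complP n π.1 ∘ σ π, hσ π⟩
  refine ⟨f, fun π => ⟨σ π, fun j => rfl⟩, fun π => Subtype.ext ?_⟩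
  have hff : (f (f π)).1 = complP n (complP n π.1) ∘ (σ π * σ (f π)) := rfl
  rw [complP_complP π.2.1] at hff
  rw [hff]
  exact π.2.comp_perm_eq _ (hff ▸ (f (f π)).2)
end

section
/- If the singleton blocks {-n} and {n} are removed from a standard type B partition ρ of ⟨n⟩ with 2k+1 blocks whose last two blocks are S_{2k-1} = {-n} and S_{2k} = {n}, then the resulting partition ρ' is a standard type B partition of ⟨n-1⟩ with 2k-1 blocks, inv(ρ) = inv(ρ'), and los_{B'}(ρ) = los_{B'}(ρ') + 2k. -/
open Finset Polynomial

section Aux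
variable {m : ℕ}

lemma mB_nonneg (S : Fin m → Finset ℤ) (j : Fin m) : 0 ≤ mB S j := by
  unfold mB
  rcases h : ((S j).image (fun x => |x|)).min with _ | a
  · exact le_refl 0
  · have := Finset.mem_of_min h
    simp only [Finset.mem_image] at this
    obtain ⟨x, _, hx⟩ := this
    rw [← hx]; exact abs_nonneg x

lemma mB_le_of_mem (S : Fin m → Finset ℤ) (j : Fin m) (x : ℤ) (hx : x ∈ S j) :
    mB S j ≤ |x| := by
  unfold mB
  have hmem : |x| ∈ (S j).image (fun x => |x|) := Finset.mem_image_of_mem _ hx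
  rcases h : ((S j).image (fun x => |x|)).min with _ | a
  · exact absurd (Finset.min_eq_top.mp h ▸ hmem) (by simp)
  · have := Finset.min_le_of_eq hmem h
    exact_mod_cast this

lemma mB_singleton (S : Fin m → Finset ℤ) (j : Fin m) (a : ℤ) (h : S j = {a}) :
    mB S j = |a| := by
  unfold mB; rw [h]; simp

end Aux

set_option maxHeartbeats 1000000 in
/-- removing the singleton blocks S_{2k-1} = {-n}, S_{2k} = {n} from a
standard type B partition of ⟨n⟩ yields a standard type B partition ρ' of ⟨n-1⟩ with
two fewer blocks, with inv ρ = inv ρ' and los_{B'} ρ = los_{B'} ρ' + 2k. -/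
theorem stmt17 (n k : ℕ) (S : Fin (2*(k+1)+1) → Finset ℤ)
    (hS : IsStandardB (n+1) (k+1) S)
    (h1 : S ⟨2*k+1, by omega⟩ = {-((n : ℤ)+1)})
    (h2 : S ⟨2*k+2, by omega⟩ = {((n : ℤ)+1)}) :
    IsStandardB n k (fun i : Fin (2*k+1) => S ⟨i.val, by have := i.isLt; omega⟩) ∧
    invB S = invB (fun i : Fin (2*k+1) => S ⟨i.val, by have := i.isLt; omega⟩) ∧
    losB' S = losB' (fun i : Fin (2*k+1) => S ⟨i.val, by have := i.isLt; omega⟩)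
      + 2*(k+1) := by
  obtain ⟨⟨hne, hdisj, hunion, h0, hnegcl, hpair⟩, hmem, hmono⟩ := hS
  set T : Fin (2*k+1) → Finset ℤ :=
    (fun i : Fin (2*k+1) => S ⟨i.val, by have := i.isLt; omega⟩) with hT
  have J1 : Fin (2*(k+1)+1) := ⟨2*k+1, by omega⟩
  have hIcc : ∀ i : Fin (2*(k+1)+1), ∀ x ∈ S i, -((n:ℤ)+1) ≤ x ∧ x ≤ (n:ℤ)+1 := by
    intro i x hx
    have : x ∈ Finset.univ.biUnion S := Finset.mem_biUnion.mpr ⟨i, Finset.mem_univ _, hx⟩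
    rw [hunion] at this
    simp only [angleB, Finset.mem_Icc] at this
    constructor <;> [exact le_trans (by push_cast; omega) this.1; exact le_trans this.2 (by push_cast; omega)]
  have htop : ∀ i : Fin (2*(k+1)+1), ((n:ℤ)+1) ∈ S i → i.val = 2*k+2 := by
    intro i hx
    by_contra hne'
    have hd := hdisj i ⟨2*k+2, by omega⟩ (by simp [Fin.ext_iff, hne'])
    exact Finset.disjoint_left.mp hd hx (by rw [h2]; simp)
  have hbot : ∀ i : Fin (2*(k+1)+1), (-((n:ℤ)+1)) ∈ S i → i.val = 2*k+1 := by
    intro i hx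
    by_contra hne'
    have hd := hdisj i ⟨2*k+1, by omega⟩ (by simp [Fin.ext_iff, hne'])
    exact Finset.disjoint_left.mp hd hx (by rw [h1]; simp)
  have hmJ1 : mB S ⟨2*k+1, by omega⟩ = (n:ℤ)+1 := by
    rw [mB_singleton S _ _ h1]; rw [abs_neg]; exact abs_of_nonneg (by positivity)
  have hmJ2 : mB S ⟨2*k+2, by omega⟩ = (n:ℤ)+1 := by
    rw [mB_singleton S _ _ h2]; exact abs_of_nonneg (by positivity)
  have hmle : ∀ j : Fin (2*(k+1)+1), mB S j ≤ (n:ℤ)+1 := by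
    intro j
    obtain ⟨x, hx⟩ := hne j
    refine le_trans (mB_le_of_mem S j x hx) ?_
    have := hIcc j x hx
    rw [abs_le]; omega
  have hmBT : ∀ j : Fin (2*k+1), mB T j = mB S ⟨j.val, by have := j.isLt; omega⟩ := fun j => rfl
  -- Part 1: standardness
  have part1 : IsStandardB n k T := by
    refine ⟨⟨fun i => hne _, fun i j hij => hdisj _ _ (by simpa [Fin.ext_iff] using (Fin.val_ne_iff.mpr hij : i.val ≠ j.val)), ?_, ?_, ?_, ?_⟩, ?_, ?_⟩
    · ext x
      simp only [Finset.mem_biUnion, Finset.mem_univ, true_and, angleB, Finset.mem_Icc]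
      constructor
      · rintro ⟨i, hx⟩
        have hb := hIcc _ x hx
        have hx1 : x ≠ (n:ℤ)+1 := by
          intro h; subst h
          have h' : i.val = 2*k+2 := htop _ hx
          have := i.isLt; omega
        have hx2 : x ≠ -((n:ℤ)+1) := by
          intro h; subst h
          have h' : i.val = 2*k+1 := hbot _ hx
          have := i.isLt; omega
        omega
      · intro hx
        have : x ∈ angleB (n+1) := by
          simp only [angleB, Finset.mem_Icc]; push_cast; omega
        rw [← hunion] at this
        obtain ⟨i, _, hxi⟩ := Finset.mem_biUnion.mp this
        have hi1 : i.val ≠ 2*k+1 := by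
          intro h
          have : S i = {-((n:ℤ)+1)} := by rw [← h1]; congr 1; exact Fin.ext h
          rw [this, Finset.mem_singleton] at hxi; omega
        have hi2 : i.val ≠ 2*k+2 := by
          intro h
          have : S i = {((n:ℤ)+1)} := by rw [← h2]; congr 1; exact Fin.ext h
          rw [this, Finset.mem_singleton] at hxi; omega
        have hilt : i.val < 2*k+1 := by have := i.isLt; omega
        refine ⟨⟨i.val, hilt⟩, ?_⟩
        show x ∈ S ⟨i.val, _⟩
        rwa [Fin.eta]
    · show (0:ℤ) ∈ S ⟨((0 : Fin (2*k+1))).val, _⟩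
      have : (⟨((0 : Fin (2*k+1))).val, by omega⟩ : Fin (2*(k+1)+1)) = 0 := by
        exact Fin.ext (by simp)
      rw [this]; exact h0
    · intro x hx
      have h00 : (⟨((0 : Fin (2*k+1))).val, by omega⟩ : Fin (2*(k+1)+1)) = 0 :=
        Fin.ext (by simp)
      show -x ∈ S ⟨((0 : Fin (2*k+1))).val, _⟩
      rw [h00]
      apply hnegcl
      have : x ∈ S ⟨((0 : Fin (2*k+1))).val, by omega⟩ := hx
      rwa [h00] at this
    · intro i hi h
      exact hpair i hi (by omega)
    · intro i hi h
      exact hmem i hi (by omega)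
    · intro i h
      exact hmono i (by omega)
  have einj : Function.Injective
      (fun p : ℤ × Fin (2*k+1) => (p.1, (⟨p.2.val, by have := p.2.isLt; omega⟩ : Fin (2*(k+1)+1)))) := by
    rintro ⟨a, b⟩ ⟨c, d⟩ h
    simp only [Prod.mk.injEq, Fin.mk.injEq] at h
    exact Prod.ext h.1 (Fin.ext h.2)
  refine ⟨part1, ?_, ?_⟩
  -- Part 2: inv
  · unfold invB
    rw [show {p : ℤ × Fin (2*(k+1)+1) | (∃ i < p.2, p.1 ∈ S i) ∧ mB S p.2 ≤ p.1}
        = (fun p : ℤ × Fin (2*k+1) => (p.1, (⟨p.2.val, by have := p.2.isLt; omega⟩ : Fin (2*(k+1)+1)))) ''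
          {p : ℤ × Fin (2*k+1) | (∃ i < p.2, p.1 ∈ T i) ∧ mB T p.2 ≤ p.1} from ?_]
    · exact (Set.ncard_image_of_injective _ einj)
    · ext ⟨s, j⟩
      simp only [Set.mem_setOf_eq, Set.mem_image, Prod.mk.injEq]
      constructor
      · rintro ⟨⟨i, hij, hsi⟩, hm⟩
        have hjlt : j.val < 2*k+1 := by
          by_contra hj
          have hj' : j.val = 2*k+1 ∨ j.val = 2*k+2 := by have := j.isLt; omega
          have hmj : mB S j = (n:ℤ)+1 := by
            rcases hj' with h | h
            · rw [show j = ⟨2*k+1, by omega⟩ from Fin.ext h]; exact hmJ1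
            · rw [show j = ⟨2*k+2, by omega⟩ from Fin.ext h]; exact hmJ2
          have hb := hIcc i s hsi
          have hs : s = (n:ℤ)+1 := by omega
          have := htop i (hs ▸ hsi)
          have : i.val < j.val := hij
          omega
        refine ⟨(s, ⟨j.val, hjlt⟩), ⟨⟨⟨i.val, by have : i.val < j.val := hij; omega⟩, ?_, ?_⟩, ?_⟩, rfl, Fin.ext rfl⟩
        · show i.val < j.val; exact hij
        · show s ∈ S ⟨i.val, _⟩; rwa [Fin.eta]
        · show mB S ⟨j.val, by omega⟩ ≤ s
          rwa [show (⟨j.val, by have := j.isLt; omega⟩ : Fin (2*(k+1)+1)) = j from Fin.ext rfl]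
      · rintro ⟨⟨s', j'⟩, ⟨⟨i', hij', hsi'⟩, hm'⟩, hs, hj⟩
        subst hs
        refine ⟨⟨⟨i'.val, by have := i'.isLt; omega⟩, ?_, hsi'⟩, ?_⟩
        · rw [← hj]; show i'.val < j'.val; exact hij'
        · rw [← hj]; exact hm'
  -- Part 3: los
  · have hsplit : {p : ℤ × Fin (2*(k+1)+1) | (∃ i, p.2 < i ∧ p.1 ∈ S i) ∧ mB S p.2 ≤ p.1} = ((fun p : ℤ × Fin (2*k+1) => (p.1, (⟨p.2.val, by have := p.2.isLt; omega⟩ : Fin (2*(k+1)+1)))) '' {p : ℤ × Fin (2*k+1) | (∃ i, p.2 < i ∧ p.1 ∈ T i) ∧ mB T p.2 ≤ p.1}) ∪ {p : ℤ × Fin (2*(k+1)+1) | p.1 = (n:ℤ)+1 ∧ p.2.val < 2*k+2} := by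
      ext ⟨s, j⟩
      simp only [Set.mem_setOf_eq, Set.mem_union, Set.mem_image, Prod.mk.injEq]
      constructor
      · rintro ⟨⟨i, hij, hsi⟩, hm⟩
        by_cases hs : s = (n:ℤ)+1
        · right
          refine ⟨hs, ?_⟩
          have h22 : i.val = 2*k+2 := htop i (hs ▸ hsi)
          have : j.val < i.val := hij
          omega
        · left
          have hi2 : i.val ≠ 2*k+2 := by
            intro h
            have : S i = {((n:ℤ)+1)} := by rw [← h2]; congr 1; exact Fin.ext h
            rw [this, Finset.mem_singleton] at hsi; exact hs hsi
          have hi1 : i.val ≠ 2*k+1 := by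
            intro h
            have : S i = {-((n:ℤ)+1)} := by rw [← h1]; congr 1; exact Fin.ext h
            rw [this, Finset.mem_singleton] at hsi
            have := mB_nonneg S j
            omega
          have hilt : i.val < 2*k+1 := by have := i.isLt; omega
          have hjlt : j.val < 2*k+1 := by have : j.val < i.val := hij; omega
          refine ⟨(s, ⟨j.val, hjlt⟩), ⟨⟨⟨i.val, hilt⟩, ?_, ?_⟩, ?_⟩, rfl, Fin.ext rfl⟩
          · show j.val < i.val; exact hij
          · show s ∈ S ⟨i.val, _⟩; rwa [Fin.eta]
          · show mB S ⟨j.val, _⟩ ≤ s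
            rwa [show (⟨j.val, by have := j.isLt; omega⟩ : Fin (2*(k+1)+1)) = j from Fin.ext rfl]
      · rintro (⟨⟨s', j'⟩, ⟨⟨i', hij', hsi'⟩, hm'⟩, hs, hj⟩ | ⟨hs, hj⟩)
        · subst hs
          refine ⟨⟨⟨i'.val, by have := i'.isLt; omega⟩, ?_, hsi'⟩, ?_⟩
          · rw [← hj]; show j'.val < i'.val; exact hij'
          · rw [← hj]; exact hm'
        · subst hs
          refine ⟨⟨⟨2*k+2, by omega⟩, ?_, by rw [h2]; simp⟩, hmle j⟩
          show j.val < 2*k+2; exact hj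
    have hAfin : Set.Finite {p : ℤ × Fin (2*(k+1)+1) | (∃ i, p.2 < i ∧ p.1 ∈ S i) ∧ mB S p.2 ≤ p.1} := by
      apply Set.Finite.subset (Finset.finite_toSet ((angleB (n+1)) ×ˢ (Finset.univ : Finset (Fin (2*(k+1)+1)))))
      rintro ⟨s, j⟩ ⟨⟨i, _, hsi⟩, _⟩
      simp only [Finset.coe_product, Set.mem_prod, Finset.mem_coe, Finset.mem_univ, and_true]
      have := hIcc i s hsi
      simp only [angleB, Finset.mem_Icc]; push_cast; omega
    have hdisjBE : Disjoint ((fun p : ℤ × Fin (2*k+1) => (p.1, (⟨p.2.val, by have := p.2.isLt; omega⟩ : Fin (2*(k+1)+1)))) '' {p : ℤ × Fin (2*k+1) | (∃ i, p.2 < i ∧ p.1 ∈ T i) ∧ mB T p.2 ≤ p.1}) {p : ℤ × Fin (2*(k+1)+1) | p.1 = (n:ℤ)+1 ∧ p.2.val < 2*k+2} := by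
      rw [Set.disjoint_left]
      rintro ⟨s, j⟩ ⟨⟨s', j'⟩, ⟨⟨i', _, hsi'⟩, _⟩, heq⟩ ⟨hs', _⟩
      simp only [Prod.mk.injEq] at heq
      rw [heq.1, hs'] at hsi'
      have h' : i'.val = 2*k+2 := htop _ hsi'
      have := i'.isLt; omega
    have hBfin : Set.Finite ((fun p : ℤ × Fin (2*k+1) => (p.1, (⟨p.2.val, by have := p.2.isLt; omega⟩ : Fin (2*(k+1)+1)))) '' {p : ℤ × Fin (2*k+1) | (∃ i, p.2 < i ∧ p.1 ∈ T i) ∧ mB T p.2 ≤ p.1}) := hAfin.subset (by rw [hsplit]; exact Set.subset_union_left)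
    have hEfin : Set.Finite {p : ℤ × Fin (2*(k+1)+1) | p.1 = (n:ℤ)+1 ∧ p.2.val < 2*k+2} := hAfin.subset (by rw [hsplit]; exact Set.subset_union_right)
    have hEcard : Set.ncard {p : ℤ × Fin (2*(k+1)+1) | p.1 = (n:ℤ)+1 ∧ p.2.val < 2*k+2} = 2*(k+1) := by
      have hEim : {p : ℤ × Fin (2*(k+1)+1) | p.1 = (n:ℤ)+1 ∧ p.2.val < 2*k+2} = (fun j : Fin (2*(k+1)+1) => (((n:ℤ)+1), j)) ''
          ↑(Finset.Iio (⟨2*k+2, by omega⟩ : Fin (2*(k+1)+1))) := by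
        ext ⟨s, j⟩
        simp only [Set.mem_setOf_eq, Set.mem_image, Finset.coe_Iio, Set.mem_Iio,
          Prod.mk.injEq]
        constructor
        · rintro ⟨rfl, hj⟩
          exact ⟨j, by rw [Fin.lt_def]; exact hj, rfl, rfl⟩
        · rintro ⟨j', hj', rfl, rfl⟩
          exact ⟨rfl, by rw [Fin.lt_def] at hj'; exact hj'⟩
      rw [hEim, Set.ncard_image_of_injective _ (fun a b h => by simpa using h),
        Set.ncard_coe_finset, Fin.card_Iio]
      show 2*k+2 = 2*(k+1)
      omega
    unfold losB'
    rw [hsplit, Set.ncard_union_eq hdisjBE hBfin hEfin,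
      Set.ncard_image_of_injective _ einj, hEcard]
end
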